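/- arXiv:2605.25604 — 3 statements merged into one kernel-verified Lean document; each statement's English description precedes it below -/
import Mathlib

section
/- With the setup of reward components r_k having σ_k > 0, convex weights w_k, combined reward r_sum = ∑_k w_k r_k with σ_sum > 0, DVAO advantage A_DVAO(j) = (∑_k w_k σ_k A_k(j)) / (∑_l w_l σ_l) and reward-combination advantage A_sum(j) = (r_sum(j) − mean(r_sum))/σ_sum: for every rollout index j, |A_DVAO(j)| ≤ |A_sum(j)|, with equality (for all j with A_sum(j) ≠ 0) iff Cov(r_k, r_l) = σ_k σ_l for all k ≠ l with positive weights. -/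
open Finset

noncomputable def gMean (G : ℕ) (r : Fin G → ℝ) : ℝ := (∑ j, r j) / G
noncomputable def gVar (G : ℕ) (r : Fin G → ℝ) : ℝ := (∑ j, (r j - gMean G r)^2) / G
noncomputable def gStd (G : ℕ) (r : Fin G → ℝ) : ℝ := Real.sqrt (gVar G r)
noncomputable def gCov (G : ℕ) (u v : Fin G → ℝ) : ℝ :=
  (∑ j, (u j - gMean G u) * (v j - gMean G v)) / G
noncomputable def stdAdv (G : ℕ) (r : Fin G → ℝ) (j : Fin G) : ℝ :=
  (r j - gMean G r) / gStd G r

/-!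
The DVAO numerator `∑ w_k σ_k A_k(j)` is the centred combined reward, i.e. `σ_sum A_sum(j)`, so
`A_DVAO = (σ_sum / ∑ w_l σ_l) A_sum`. Expanding `Var(r_sum)` bilinearly,
`(∑ w_l σ_l)² - σ_sum² = ∑_{k,l} w_k w_l (σ_k σ_l - Cov(r_k, r_l))`, a sum of terms that are
nonnegative by Cauchy–Schwarz. Hence the ratio is at most `1`, with equality iff every term
vanishes.
-/

section Moments

variable {G : ℕ}

lemma gVar_nonneg (r : Fin G → ℝ) : 0 ≤ gVar G r := by
  unfold gVar; positivity

lemma gStd_nonneg (r : Fin G → ℝ) : 0 ≤ gStd G r := Real.sqrt_nonneg _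

lemma gStd_sq (r : Fin G → ℝ) : gStd G r ^ 2 = gVar G r := Real.sq_sqrt (gVar_nonneg r)

lemma gCov_self (r : Fin G → ℝ) : gCov G r r = gVar G r := by
  simp only [gCov, gVar, sq]

lemma sub_gMean_eq_zero_of_gStd_eq_zero {r : Fin G → ℝ} (h : gStd G r = 0) (j : Fin G) :
    r j - gMean G r = 0 := by
  have hG : (G : ℝ) ≠ 0 := Nat.cast_ne_zero.mpr (Fin.pos j).ne'
  have hsum : ∑ i, (r i - gMean G r) ^ 2 = 0 := by
    rw [gStd, Real.sqrt_eq_zero (gVar_nonneg r), gVar, div_eq_zero_iff] at h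
    exact h.resolve_right hG
  exact pow_eq_zero_iff two_ne_zero |>.mp <|
    (sum_eq_zero_iff_of_nonneg fun i _ => sq_nonneg _).mp hsum j (mem_univ j)

-- Holds even when `gStd G r = 0` (where `stdAdv` is the junk `x / 0 = 0`): all deviations vanish.
lemma gStd_mul_stdAdv (r : Fin G → ℝ) (j : Fin G) :
    gStd G r * stdAdv G r j = r j - gMean G r := by
  rcases eq_or_ne (gStd G r) 0 with h | h
  · rw [h, zero_mul, sub_gMean_eq_zero_of_gStd_eq_zero h]
  · exact mul_div_cancel₀ _ h

lemma exists_stdAdv_ne_zero {r : Fin G → ℝ} (h : 0 < gStd G r) : ∃ j, stdAdv G r j ≠ 0 := by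
  by_contra! hA
  have hdev : ∀ j, r j - gMean G r = 0 := fun j => by
    rw [← gStd_mul_stdAdv, hA j, mul_zero]
  have : gVar G r = 0 := by simp [gVar, hdev]
  rw [gStd, this, Real.sqrt_zero] at h
  exact h.false

lemma gCov_le_gStd_mul_gStd (u v : Fin G → ℝ) : gCov G u v ≤ gStd G u * gStd G v := by
  rw [gCov, gStd, gStd, gVar, gVar, ← Real.sqrt_mul (by positivity), div_mul_div_comm,
    Real.sqrt_div' _ (by positivity), Real.sqrt_mul_self (by positivity),
    Real.sqrt_mul (by positivity)]
  gcongr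
  exact Real.sum_mul_le_sqrt_mul_sqrt _ _ _

end Moments

section WeightedSum

variable {n G : ℕ} (w : Fin n → ℝ) (r : Fin n → Fin G → ℝ)

lemma gMean_wsum : gMean G (fun j => ∑ k, w k * r k j) = ∑ k, w k * gMean G (r k) := by
  simp only [gMean, sum_div, mul_sum, mul_div_assoc]
  exact sum_comm

lemma wsum_sub_gMean_wsum (j : Fin G) :
    (∑ k, w k * r k j) - gMean G (fun j => ∑ k, w k * r k j)
      = ∑ k, w k * (r k j - gMean G (r k)) := by
  simp only [gMean_wsum, mul_sub, sum_sub_distrib]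

lemma gVar_wsum :
    gVar G (fun j => ∑ k, w k * r k j) = ∑ k, ∑ l, w k * w l * gCov G (r k) (r l) := by
  simp only [gVar, gCov, wsum_sub_gMean_wsum, sq, mul_div_assoc', ← sum_div,
    mul_sum, sum_mul]
  congr 1
  rw [sum_comm]
  refine sum_congr rfl fun k _ => ?_
  rw [sum_comm]
  refine sum_congr rfl fun l _ => ?_
  refine sum_congr rfl fun j _ => ?_
  ring

lemma sq_sum_mul_gStd_sub_gVar_wsum :
    (∑ k, w k * gStd G (r k)) ^ 2 - gVar G (fun j => ∑ k, w k * r k j)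
      = ∑ k, ∑ l, w k * w l * (gStd G (r k) * gStd G (r l) - gCov G (r k) (r l)) := by
  simp only [gVar_wsum, sq, sum_mul_sum, mul_sub, sum_sub_distrib]
  congr 1
  exact sum_congr rfl fun k _ => sum_congr rfl fun l _ => by ring

variable {w}

lemma mul_gStd_mul_gStd_sub_gCov_nonneg (hw : ∀ k, 0 ≤ w k) (k l : Fin n) :
    0 ≤ w k * w l * (gStd G (r k) * gStd G (r l) - gCov G (r k) (r l)) :=
  mul_nonneg (mul_nonneg (hw k) (hw l)) (sub_nonneg.mpr (gCov_le_gStd_mul_gStd _ _))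

lemma sum_mul_gStd_nonneg (hw : ∀ k, 0 ≤ w k) : 0 ≤ ∑ k, w k * gStd G (r k) :=
  sum_nonneg fun k _ => mul_nonneg (hw k) (gStd_nonneg _)

lemma gStd_wsum_le (hw : ∀ k, 0 ≤ w k) :
    gStd G (fun j => ∑ k, w k * r k j) ≤ ∑ k, w k * gStd G (r k) := by
  have hvar : gVar G (fun j => ∑ k, w k * r k j) ≤ (∑ k, w k * gStd G (r k)) ^ 2 := by
    rw [← sub_nonneg, sq_sum_mul_gStd_sub_gVar_wsum]
    exact sum_nonneg fun k _ => sum_nonneg fun l _ => mul_gStd_mul_gStd_sub_gCov_nonneg r hw k l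
  exact (Real.sqrt_le_left (sum_mul_gStd_nonneg r hw)).mpr hvar

lemma gStd_wsum_eq_iff (hw : ∀ k, 0 ≤ w k) :
    gStd G (fun j => ∑ k, w k * r k j) = ∑ k, w k * gStd G (r k) ↔
      ∀ k l, k ≠ l → 0 < w k → 0 < w l → gCov G (r k) (r l) = gStd G (r k) * gStd G (r l) := by
  have hgap := mul_gStd_mul_gStd_sub_gCov_nonneg r hw
  rw [gStd, Real.sqrt_eq_iff_eq_sq (gVar_nonneg _) (sum_mul_gStd_nonneg r hw), eq_comm,
    ← sub_eq_zero, sq_sum_mul_gStd_sub_gVar_wsum,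
    sum_eq_zero_iff_of_nonneg fun k _ => sum_nonneg fun l _ => hgap k l]
  simp only [mem_univ, forall_const, sum_eq_zero_iff_of_nonneg fun l _ => hgap _ l,
    mul_eq_zero, sub_eq_zero]
  refine forall₂_congr fun k l => ?_
  rcases eq_or_ne k l with rfl | hkl
  · simp [gCov_self, ← gStd_sq, sq]
  · simp only [ne_eq, hkl, not_false_eq_true, forall_const, (hw k).lt_iff_ne', (hw l).lt_iff_ne']
    tauto

lemma sum_mul_gStd_mul_stdAdv (j : Fin G) :
    ∑ k, w k * gStd G (r k) * stdAdv G (r k) j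
      = gStd G (fun j => ∑ k, w k * r k j) * stdAdv G (fun j => ∑ k, w k * r k j) j := by
  simp only [mul_assoc, gStd_mul_stdAdv, wsum_sub_gMean_wsum]

end WeightedSum

theorem stmt4_general (n G : ℕ) (r : Fin n → Fin G → ℝ) (w : Fin n → ℝ)
    (hσsum : 0 < gStd G (fun j => ∑ k, w k * r k j))
    (hw : ∀ k, 0 ≤ w k) :
    (∀ j, |(∑ k, w k * gStd G (r k) * stdAdv G (r k) j) / (∑ l, w l * gStd G (r l))|
        ≤ |stdAdv G (fun j' => ∑ k, w k * r k j') j|) ∧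
    ((∀ j, stdAdv G (fun j' => ∑ k, w k * r k j') j ≠ 0 →
        |(∑ k, w k * gStd G (r k) * stdAdv G (r k) j) / (∑ l, w l * gStd G (r l))|
          = |stdAdv G (fun j' => ∑ k, w k * r k j') j|) ↔
      ∀ k l, k ≠ l → 0 < w k → 0 < w l →
        gCov G (r k) (r l) = gStd G (r k) * gStd G (r l)) := by
  have hle := gStd_wsum_le r hw
  have hS := hσsum.trans_le hle
  simp only [sum_mul_gStd_mul_stdAdv, abs_div, abs_mul, abs_of_pos hσsum, abs_of_pos hS]
  rw [← gStd_wsum_eq_iff r hw]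
  refine ⟨fun j => ?_, fun h => ?_, fun h j _ => ?_⟩
  · rw [div_le_iff₀ hS, mul_comm _ (∑ l, _)]
    exact mul_le_mul_of_nonneg_right hle (abs_nonneg _)
  · obtain ⟨j, hj⟩ := exists_stdAdv_ne_zero hσsum
    have heq := h j hj
    rw [div_eq_iff hS.ne', mul_comm (|_|)] at heq
    exact mul_right_cancel₀ (abs_pos.mpr hj).ne' heq
  · rw [h, mul_div_cancel_left₀ _ hS.ne']

theorem stmt4 (n G : ℕ) (hG : 0 < G) (r : Fin n → Fin G → ℝ) (w : Fin n → ℝ)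
    (hσ : ∀ k, 0 < gStd G (r k))
    (hσsum : 0 < gStd G (fun j => ∑ k, w k * r k j))
    (hw : ∀ k, 0 ≤ w k) (hwsum : ∑ k, w k = 1) :
    (∀ j, |(∑ k, w k * gStd G (r k) * stdAdv G (r k) j) / (∑ l, w l * gStd G (r l))|
        ≤ |stdAdv G (fun j' => ∑ k, w k * r k j') j|) ∧
    ((∀ j, stdAdv G (fun j' => ∑ k, w k * r k j') j ≠ 0 →
        |(∑ k, w k * gStd G (r k) * stdAdv G (r k) j) / (∑ l, w l * gStd G (r l))|
          = |stdAdv G (fun j' => ∑ k, w k * r k j') j|) ↔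
      ∀ k l, k ≠ l → 0 < w k → 0 < w l →
        gCov G (r k) (r l) = gStd G (r k) * gStd G (r l)) :=
  stmt4_general n G r w hσsum hw
end

section
/- In the DVAO setting with A_DVAO(j) = (∑_l w_l (r_l(j) − μ_l)) / S where S = ∑_l w_l σ_l > 0, the partial derivative satisfies ∂A_DVAO(j)/∂r_k(j) = (w_k/S)(1 − 1/G − A_DVAO(j) A_k(j)/G) = (w̃_k/σ_k)(1 − 1/G − A_DVAO(j) A_k(j)/G), where w̃_k = w_k σ_k / S. -/
open Finset

/-!
Moving the single coordinate r_k(j) to t changes only the k-th summands of the numerator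
N = ∑ w_l (r_l(j) - μ_l) and of S = ∑ w_l σ_l, at rates w_k (1 - 1/G) and w_k A_k(j) / G: the
variance moves at twice the covariance with the direction δ_j, and Cov(r, δ_j) = (r(j) - μ) / G
since the deviations of r sum to zero. The quotient rule then gives
(w_k / S) (1 - 1/G - (N / S) A_k(j) / G).
-/

section Curve

variable {G : ℕ} {γ : ℝ → Fin G → ℝ} {v : Fin G → ℝ} {x : ℝ}

theorem hasDerivAt_gMean_comp (hγ : HasDerivAt γ v x) :
    HasDerivAt (fun t => gMean G (γ t)) (gMean G v) x :=
  (HasDerivAt.fun_sum fun i _ => hasDerivAt_pi.mp hγ i).div_const _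

theorem hasDerivAt_gVar_comp (hγ : HasDerivAt γ v x) :
    HasDerivAt (fun t => gVar G (γ t)) (2 * gCov G (γ x) v) x := by
  have hdev (i : Fin G) := ((hasDerivAt_pi.mp hγ i).fun_sub (hasDerivAt_gMean_comp hγ)).fun_pow 2
  refine ((HasDerivAt.fun_sum (u := Finset.univ) fun i _ => hdev i).div_const (G : ℝ)).congr_deriv ?_
  rw [gCov, mul_div_assoc', Finset.mul_sum]
  congr 1
  refine Finset.sum_congr rfl fun i _ => ?_
  ring

theorem hasDerivAt_gStd_comp (hγ : HasDerivAt γ v x) (hσ : 0 < gStd G (γ x)) :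
    HasDerivAt (fun t => gStd G (γ t)) (gCov G (γ x) v / gStd G (γ x)) x := by
  have hvar : gVar G (γ x) ≠ 0 := (Real.sqrt_pos.mp hσ).ne'
  refine ((Real.hasDerivAt_sqrt hvar).comp x (hasDerivAt_gVar_comp hγ)).congr_deriv ?_
  rw [gStd]
  field_simp

end Curve

theorem sum_sub_gMean_eq_zero {G : ℕ} (r : Fin G → ℝ) : ∑ i, (r i - gMean G r) = 0 := by
  rcases G.eq_zero_or_pos with rfl | hG
  · simp
  · have : (G : ℝ) ≠ 0 := by positivity
    simp [Finset.sum_sub_distrib, gMean, mul_div_cancel₀ _ this]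

theorem gMean_single {G : ℕ} (j : Fin G) : gMean G (Pi.single j 1) = 1 / G := by
  simp [gMean]

theorem gCov_single {G : ℕ} (r : Fin G → ℝ) (j : Fin G) :
    gCov G r (Pi.single j 1) = (r j - gMean G r) / G := by
  simp only [gCov, gMean_single]
  rw [Finset.sum_congr rfl fun i _ => mul_sub _ _ _, Finset.sum_sub_distrib, ← Finset.sum_mul,
    sum_sub_gMean_eq_zero, zero_mul, sub_zero]
  simp [Pi.single_apply]

theorem hasDerivAt_gMean_update {G : ℕ} (r : Fin G → ℝ) (j : Fin G) (y : ℝ) :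
    HasDerivAt (fun t => gMean G (Function.update r j t)) (1 / G) y := by
  simpa only [gMean_single] using hasDerivAt_gMean_comp (hasDerivAt_update r j y)

theorem hasDerivAt_gStd_update {G : ℕ} {r : Fin G → ℝ} (j : Fin G) (hσ : 0 < gStd G r) :
    HasDerivAt (fun t => gStd G (Function.update r j t)) (stdAdv G r j / G) (r j) := by
  have h := hasDerivAt_gStd_comp (hasDerivAt_update r j (r j)) (by rwa [Function.update_eq_self])
  rw [Function.update_eq_self, gCov_single] at h
  exact h.congr_deriv (by rw [stdAdv, div_right_comm])

theorem hasDerivAt_sum_update {ι α : Type*} [Fintype ι] [DecidableEq ι] (r : ι → α) (k : ι)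
    {c : ℝ → α} (φ : ι → α → ℝ) {d x : ℝ} (h : HasDerivAt (fun t => φ k (c t)) d x) :
    HasDerivAt (fun t => ∑ l, φ l (Function.update r k (c t) l)) d x := by
  have hterm (l : ι) : HasDerivAt (fun t => φ l (Function.update r k (c t) l))
      (if l = k then d else 0) x := by
    rcases eq_or_ne l k with rfl | hl
    · simpa using h
    · simpa [hl] using hasDerivAt_const x (φ l (r l))
  simpa using HasDerivAt.fun_sum (u := Finset.univ) fun l _ => hterm l

theorem stmt7_general (n G : ℕ) (r : Fin n → Fin G → ℝ) (w : Fin n → ℝ)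
    (hσ : ∀ l, 0 < gStd G (r l))
    (hS : 0 < ∑ l, w l * gStd G (r l)) (k : Fin n) (j : Fin G) :
    HasDerivAt
      (fun t =>
        (∑ l, w l * ((Function.update r k (Function.update (r k) j t)) l j
            - gMean G ((Function.update r k (Function.update (r k) j t)) l)))
          / (∑ l, w l * gStd G ((Function.update r k (Function.update (r k) j t)) l)))
      ((w k / (∑ l, w l * gStd G (r l))) *
        (1 - 1 / (G : ℝ)
          - ((∑ l, w l * (r l j - gMean G (r l))) / (∑ l, w l * gStd G (r l)))
              * stdAdv G (r k) j / G))
      (r k j) ∧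
    (w k / (∑ l, w l * gStd G (r l))) *
        (1 - 1 / (G : ℝ)
          - ((∑ l, w l * (r l j - gMean G (r l))) / (∑ l, w l * gStd G (r l)))
              * stdAdv G (r k) j / G)
      = ((w k * gStd G (r k) / (∑ l, w l * gStd G (r l))) / gStd G (r k)) *
        (1 - 1 / (G : ℝ)
          - ((∑ l, w l * (r l j - gMean G (r l))) / (∑ l, w l * gStd G (r l)))
              * stdAdv G (r k) j / G) := by
  have hnum := hasDerivAt_sum_update r k (fun l v => w l * (v j - gMean G v))
    (c := Function.update (r k) j) (by
      simpa only [Function.update_self] using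
        ((hasDerivAt_id' (r k j)).fun_sub (hasDerivAt_gMean_update (r k) j (r k j))).const_mul (w k))
  have hden := hasDerivAt_sum_update r k (fun l v => w l * gStd G v)
    (c := Function.update (r k) j) ((hasDerivAt_gStd_update j (hσ k)).const_mul (w k))
  have hquot := hnum.div hden (by simpa only [Function.update_eq_self] using hS.ne')
  simp only [Function.update_eq_self] at hquot
  have hσk := (hσ k).ne'
  refine ⟨hquot.congr_deriv ?_, by field_simp⟩
  field_simp

theorem stmt7 (n G : ℕ) (hG : 0 < G) (r : Fin n → Fin G → ℝ) (w : Fin n → ℝ)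
    (hσ : ∀ l, 0 < gStd G (r l))
    (hw : ∀ l, 0 ≤ w l) (hwsum : ∑ l, w l = 1)
    (hS : 0 < ∑ l, w l * gStd G (r l)) (k : Fin n) (j : Fin G) :
    HasDerivAt
      (fun t =>
        (∑ l, w l * ((Function.update r k (Function.update (r k) j t)) l j
            - gMean G ((Function.update r k (Function.update (r k) j t)) l)))
          / (∑ l, w l * gStd G ((Function.update r k (Function.update (r k) j t)) l)))
      ((w k / (∑ l, w l * gStd G (r l))) *
        (1 - 1 / (G : ℝ)
          - ((∑ l, w l * (r l j - gMean G (r l))) / (∑ l, w l * gStd G (r l)))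
              * stdAdv G (r k) j / G))
      (r k j) ∧
    (w k / (∑ l, w l * gStd G (r l))) *
        (1 - 1 / (G : ℝ)
          - ((∑ l, w l * (r l j - gMean G (r l))) / (∑ l, w l * gStd G (r l)))
              * stdAdv G (r k) j / G)
      = ((w k * gStd G (r k) / (∑ l, w l * gStd G (r l))) / gStd G (r k)) *
        (1 - 1 / (G : ℝ)
          - ((∑ l, w l * (r l j - gMean G (r l))) / (∑ l, w l * gStd G (r l)))
              * stdAdv G (r k) j / G) :=
  stmt7_general n G r w hσ hS k j
end

section
/- For the self-normalized advantage A(j) = (r(j) − μ)/σ of a non-constant r ∈ R^G, the sensitivity ∂A(j)/∂r(j) = (1/σ)(1 − 1/G − A(j)^2/G) is nonnegative if and only if A(j)^2 ≤ G − 1; in particular it is always nonnegative, since max_j A(j)^2 ≤ G − 1 holds for every standardized vector. -/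
open Finset

/-!
The entries of a standardized vector `A ∈ ℝ^G` satisfy `∑ A = 0` and `∑ A² = G`. Removing one
entry `A j`, the remaining `G - 1` entries sum to `-A j`, so Cauchy–Schwarz gives
`A j² ≤ (G - 1) (G - A j²)`, i.e. `A j² ≤ G - 1`. The sensitivity is `(G - 1 - A j²) / (σ G)`,
whose sign is that of `G - 1 - A j²`.
-/

theorem card_mul_sq_le_of_sum_eq_zero {ι α : Type*} [Fintype ι] [DecidableEq ι] [CommRing α]
    [LinearOrder α] [IsStrictOrderedRing α] {a : ι → α} (ha : ∑ i, a i = 0) (j : ι) :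
    Fintype.card ι * a j ^ 2 ≤ (Fintype.card ι - 1) * ∑ i, a i ^ 2 := by
  have hsum : ∑ i ∈ univ.erase j, a i = -a j := by
    rw [← add_sum_erase univ a (mem_univ j)] at ha
    linear_combination ha
  have hsq : ∑ i ∈ univ.erase j, a i ^ 2 = ∑ i, a i ^ 2 - a j ^ 2 := by
    rw [← add_sum_erase univ (fun i ↦ a i ^ 2) (mem_univ j)]
    ring
  have hcard : ((univ.erase j).card : α) = Fintype.card ι - 1 := by
    rw [card_erase_of_mem (mem_univ j), card_univ,
      Nat.cast_sub (Fintype.card_pos_iff.mpr ⟨j⟩), Nat.cast_one]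
  have hcs := sq_sum_le_card_mul_sum_sq (s := univ.erase j) (f := a)
  rw [hsum, hsq, hcard, neg_sq] at hcs
  linear_combination hcs

theorem sum_sub_gMean (G : ℕ) (r : Fin G → ℝ) : ∑ j, (r j - gMean G r) = 0 := by
  rcases Nat.eq_zero_or_pos G with rfl | hG
  · simp
  rw [sum_sub_distrib, sum_const, card_univ, Fintype.card_fin, nsmul_eq_mul, gMean,
    mul_div_cancel₀ _ (by positivity), sub_self]

theorem sum_stdAdv (G : ℕ) (r : Fin G → ℝ) : ∑ j, stdAdv G r j = 0 := by
  simp only [stdAdv, ← sum_div, sum_sub_gMean, zero_div]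

theorem sum_stdAdv_sq {G : ℕ} {r : Fin G → ℝ} (hσ : gStd G r ≠ 0) :
    ∑ j, stdAdv G r j ^ 2 = G := by
  have hvar : gStd G r ^ 2 = (∑ j, (r j - gMean G r) ^ 2) / G :=
    Real.sq_sqrt (by unfold gVar; positivity)
  have hG : (G : ℝ) ≠ 0 := by
    rintro hG
    rw [hG, div_zero] at hvar
    exact hσ (pow_eq_zero_iff two_ne_zero |>.mp hvar)
  simp only [stdAdv, div_pow, ← sum_div]
  rw [eq_div_iff hG] at hvar
  rw [← hvar]
  field_simp

theorem stdAdv_sq_le {G : ℕ} {r : Fin G → ℝ} (hG : 0 < G) (hσ : gStd G r ≠ 0) (j : Fin G) :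
    stdAdv G r j ^ 2 ≤ G - 1 := by
  have h := card_mul_sq_le_of_sum_eq_zero (sum_stdAdv G r) j
  rw [sum_stdAdv_sq hσ, Fintype.card_fin, mul_comm _ (G : ℝ)] at h
  exact le_of_mul_le_mul_left h (by exact_mod_cast hG)

theorem sensitivity_nonneg_iff {σ n a : ℝ} (hσ : 0 < σ) (hn : 0 < n) :
    0 ≤ 1 / σ * (1 - 1 / n - a ^ 2 / n) ↔ a ^ 2 ≤ n - 1 := by
  rw [mul_nonneg_iff_of_pos_left (one_div_pos.mpr hσ),
    show 1 - 1 / n - a ^ 2 / n = (n - 1 - a ^ 2) / n by field_simp, le_div_iff₀ hn, zero_mul,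
    sub_nonneg]

theorem stmt14 (G : ℕ) (hG : 0 < G) (r : Fin G → ℝ) (hσ : 0 < gStd G r) (j : Fin G) :
    ((0 ≤ (1 / gStd G r) * (1 - 1 / (G : ℝ) - (stdAdv G r j) ^ 2 / G)) ↔
      (stdAdv G r j) ^ 2 ≤ (G : ℝ) - 1) ∧
    (0 ≤ (1 / gStd G r) * (1 - 1 / (G : ℝ) - (stdAdv G r j) ^ 2 / G)) := by
  have hiff := sensitivity_nonneg_iff (a := stdAdv G r j) hσ (Nat.cast_pos.mpr hG)
  exact ⟨hiff, hiff.mpr (stdAdv_sq_le hG hσ.ne' j)⟩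
end
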